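/- The negative Pell equation x² − d·y² = −1 has an integer solution if and only if the period length D(√d) of the continued fraction expansion of √d is odd. -/

import Mathlib

/-- Iteration of the Gauss-type map producing the complete quotients of the
continued fraction expansion of `α`. -/
noncomputable def cfIter (α : ℝ) : ℕ → ℝ
  | 0 => α
  | n + 1 => (Int.fract (cfIter α n))⁻¹

/-- The `n`-th partial quotient of the continued fraction of `α`. -/
noncomputable def cfTerm (α : ℝ) (n : ℕ) : ℤ := ⌊cfIter α n⌋

/-- `t` is an eventual period of the sequence `f`. -/
def EvPeriod (t : ℕ) (f : ℕ → ℤ) : Prop := ∃ N, ∀ n, N ≤ n → f (n + t) = f n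

/-- `periodLen α` is the length of the periodic part of the continued fraction
expansion of `α`: the least positive eventual period of its partial quotients. -/
noncomputable def periodLen (α : ℝ) : ℕ := sInf {t | 0 < t ∧ EvPeriod t (cfTerm α)}

/-!
Write the complete quotients of `√d` as `(P n + √d) / Q n`. Through the convergents `h / k`,
`Q n = (-1) ^ n * (h ^ 2 - d * k ^ 2)` for the convergent just before the `n`-th complete
quotient, so `h ^ 2 - d * k ^ 2 = -1` occurs exactly at odd `n` with `Q n = 1`. From index `1` on
the complete quotients are reduced (greater than `1`, with Galois conjugate in `(-1, 0)`). This
bounds `P` and `Q`, so the expansion is eventually periodic, and it lets each partial quotient be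
read off from the next complete quotient, so the expansion is purely periodic from index `1`.
Hence `Q n = 1` means that the complete quotient `n + 1` equals the first one, i.e. that the period
divides `n`. Every solution of `x ^ 2 - d * y ^ 2 = -1` satisfies `|√d - x / y| < 1 / (2 * y ^ 2)`,
so by Legendre's theorem it comes from a convergent; solutions therefore exist iff the period has
an odd multiple.
-/

open Filter Topology

section CompleteQuotients

variable {α : ℝ}

theorem cfIter_add (α : ℝ) (m n : ℕ) : cfIter α (m + n) = cfIter (cfIter α m) n := by
  induction n with
  | zero => rfl
  | succ n ih => rw [← add_assoc, cfIter, ih, cfIter]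

theorem cfTerm_add (α : ℝ) (m n : ℕ) : cfTerm α (m + n) = cfTerm (cfIter α m) n := by
  rw [cfTerm, cfTerm, cfIter_add]

theorem cfTerm_cfIter_one (α : ℝ) : cfTerm (cfIter α 1) = fun n => cfTerm α (n + 1) :=
  funext fun n => by rw [← cfTerm_add, add_comm]

theorem cfIter_eq_cfTerm_add_inv (α : ℝ) (n : ℕ) :
    cfIter α n = cfTerm α n + (cfIter α (n + 1))⁻¹ := by
  rw [cfIter, inv_inv, cfTerm, Int.floor_add_fract]

theorem irrational_cfIter (h : Irrational α) : ∀ n, Irrational (cfIter α n)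
  | 0 => h
  | n + 1 => by
    rw [cfIter, Int.fract]
    exact ((irrational_cfIter h n).sub_intCast _).inv

theorem one_lt_cfIter_succ (h : Irrational α) (n : ℕ) : 1 < cfIter α (n + 1) := by
  have hfract : Int.fract (cfIter α n) ≠ 0 := ((irrational_cfIter h n).sub_intCast _).ne_zero
  exact one_lt_inv_iff₀.2 ⟨(Int.fract_nonneg _).lt_of_ne' hfract, Int.fract_lt_one _⟩

theorem one_le_cfTerm_succ (h : Irrational α) (n : ℕ) : 1 ≤ cfTerm α (n + 1) :=
  Int.le_floor.2 (by exact_mod_cast (one_lt_cfIter_succ h n).le)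

theorem cfIter_succ_eq_cfIter_one_iff (α : ℝ) (n : ℕ) :
    cfIter α (n + 1) = cfIter α 1 ↔ ∃ c : ℤ, cfIter α n = c + α := by
  simp only [cfIter, inv_inj, Int.fract_eq_fract, sub_eq_iff_eq_add]

theorem evPeriod_cfTerm_of_cfIter_add_eq {N t : ℕ} (h : cfIter α (N + t) = cfIter α N) :
    EvPeriod t (cfTerm α) := by
  refine ⟨N, fun n hn => ?_⟩
  obtain ⟨k, rfl⟩ := Nat.exists_eq_add_of_le hn
  rw [add_right_comm, cfTerm_add, h, ← cfTerm_add]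

end CompleteQuotients

section Continuants

def continuant (a : ℕ → ℤ) (u v : ℤ) : ℕ → ℤ
  | 0 => u
  | 1 => v
  | n + 2 => a n * continuant a u v (n + 1) + continuant a u v n

theorem continuant_succ (a : ℕ → ℤ) (u v : ℤ) : ∀ n, continuant a u v (n + 1) =
    v * continuant (fun k => a (k + 1)) 1 0 n +
      (a 0 * v + u) * continuant (fun k => a (k + 1)) 0 1 n
  | 0 => by simp [continuant]
  | 1 => by simp [continuant]
  | n + 2 => by
    rw [continuant, continuant_succ a u v (n + 1), continuant_succ a u v n]
    simp only [continuant]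
    ring

/-- `cfNum α (n + 2) / cfDen α (n + 2)` is the `n`-th convergent of `α`. -/
noncomputable def cfNum (α : ℝ) : ℕ → ℤ := continuant (cfTerm α) 0 1

noncomputable def cfDen (α : ℝ) : ℕ → ℤ := continuant (cfTerm α) 1 0

variable {α : ℝ}

theorem cfNum_add_two (α : ℝ) (n : ℕ) :
    cfNum α (n + 2) = cfTerm α n * cfNum α (n + 1) + cfNum α n :=
  rfl

theorem cfDen_add_two (α : ℝ) (n : ℕ) :
    cfDen α (n + 2) = cfTerm α n * cfDen α (n + 1) + cfDen α n :=
  rfl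

theorem cfNum_succ (α : ℝ) (n : ℕ) :
    cfNum α (n + 1) = cfDen (cfIter α 1) n + cfTerm α 0 * cfNum (cfIter α 1) n := by
  simp only [cfNum, cfDen, continuant_succ, cfTerm_cfIter_one]
  ring

theorem cfDen_succ (α : ℝ) (n : ℕ) : cfDen α (n + 1) = cfNum (cfIter α 1) n := by
  simp only [cfNum, cfDen, continuant_succ, cfTerm_cfIter_one]
  ring

theorem cfNum_mul_cfDen_sub (α : ℝ) :
    ∀ n, cfNum α (n + 1) * cfDen α n - cfNum α n * cfDen α (n + 1) = (-1) ^ n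
  | 0 => rfl
  | n + 1 => by
    rw [cfNum_add_two, cfDen_add_two, pow_succ, ← cfNum_mul_cfDen_sub α n]
    ring

theorem isCoprime_cfNum_cfDen (α : ℝ) (n : ℕ) : IsCoprime (cfNum α n) (cfDen α n) := by
  have hsq : ((-1 : ℤ) ^ n) ^ 2 = 1 := by rw [pow_right_comm, neg_one_sq, one_pow]
  exact ⟨-((-1) ^ n * cfDen α (n + 1)), (-1) ^ n * cfNum α (n + 1),
    by linear_combination (-1 : ℤ) ^ n * cfNum_mul_cfDen_sub α n + hsq⟩

theorem one_le_cfDen_add_two (h : Irrational α) : ∀ n, 1 ≤ cfDen α (n + 2)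
  | 0 => by simp [cfDen, continuant]
  | 1 => by simpa [cfDen_add_two, cfDen, continuant] using one_le_cfTerm_succ h 0
  | n + 2 => by
    have := one_le_cfDen_add_two h n
    have := one_le_cfDen_add_two h (n + 1)
    have := one_le_cfTerm_succ h (n + 1)
    rw [cfDen_add_two]
    nlinarith

theorem mul_cfIter_cfDen_add_cfDen_eq (h : Irrational α) : ∀ n,
    α * (cfIter α n * cfDen α (n + 1) + cfDen α n) = cfIter α n * cfNum α (n + 1) + cfNum α n
  | 0 => by simp [cfIter, cfNum, cfDen, continuant]
  | n + 1 => by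
    have ih := mul_cfIter_cfDen_add_cfDen_eq h n
    have hne : cfIter α (n + 1) ≠ 0 := (irrational_cfIter h (n + 1)).ne_zero
    rw [cfIter_eq_cfTerm_add_inv α n] at ih
    rw [cfNum_add_two, cfDen_add_two]
    push_cast
    field_simp at ih
    linear_combination ih

end Continuants

section Convergents

variable {α : ℝ}

theorem convergent_eq_cfNum_div_cfDen (h : Irrational α) (n : ℕ) :
    α.convergent n = (cfNum α (n + 2) : ℚ) / cfDen α (n + 2) := by
  induction n generalizing α with
  | zero => simp [cfNum, cfDen, continuant, cfTerm, cfIter]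
  | succ n ih =>
    have hβ : Irrational (cfIter α 1) := irrational_cfIter h 1
    have hne : (cfNum (cfIter α 1) (n + 2) : ℚ) ≠ 0 := by
      rw [← cfDen_succ]
      exact_mod_cast (one_pos.trans_le (one_le_cfDen_add_two h (n + 1))).ne'
    rw [Real.convergent_succ, show (Int.fract α)⁻¹ = cfIter α 1 from rfl, ih hβ,
      show n + 1 + 2 = n + 2 + 1 from rfl, cfNum_succ α (n + 2), cfDen_succ α (n + 2),
      show ⌊α⌋ = cfTerm α 0 from rfl]
    push_cast
    field_simp
    ring

theorem tendsto_cfNum_div_cfDen (h : Irrational α) :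
    Tendsto (fun n => (cfNum α (n + 2) : ℝ) / cfDen α (n + 2)) atTop (𝓝 α) := by
  refine (GenContFract.of_convergence α).congr fun n => ?_
  rw [Real.convs_eq_convergent, convergent_eq_cfNum_div_cfDen h]
  push_cast
  rfl

theorem eq_of_cfTerm_eq {β : ℝ} (hα : Irrational α) (hβ : Irrational β)
    (h : cfTerm α = cfTerm β) : α = β := by
  refine tendsto_nhds_unique (tendsto_cfNum_div_cfDen hα) ?_
  simpa only [cfNum, cfDen, h] using tendsto_cfNum_div_cfDen hβ

theorem exists_cfIter_add_eq_of_evPeriod (h : Irrational α) {t : ℕ}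
    (ht : EvPeriod t (cfTerm α)) : ∃ N, cfIter α (N + t) = cfIter α N := by
  obtain ⟨N, hN⟩ := ht
  refine ⟨N, eq_of_cfTerm_eq (irrational_cfIter h _) (irrational_cfIter h _) ?_⟩
  funext k
  rw [← cfTerm_add, ← cfTerm_add, add_right_comm]
  exact hN _ (Nat.le_add_right _ _)

theorem exists_eq_cfNum_cfDen_of_abs_sub_lt (h : Irrational α) {a b : ℤ} (hb : 0 < b)
    (hab : IsCoprime a b) (happ : |α - a / b| < 1 / (2 * b ^ 2)) :
    ∃ n, a = cfNum α (n + 2) ∧ b = cfDen α (n + 2) := by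
  have hcop : Nat.Coprime a.natAbs b.natAbs := Int.isCoprime_iff_gcd_eq_one.1 hab
  have hden : (((a / b : ℚ).den : ℤ) : ℝ) = b := by
    exact_mod_cast Rat.den_div_eq_of_coprime hb hcop
  obtain ⟨n, hn⟩ := Real.exists_rat_eq_convergent (ξ := α) (q := a / b) (by
    rw [← Int.cast_natCast, hden]
    push_cast
    exact happ)
  rw [convergent_eq_cfNum_div_cfDen h] at hn
  exact ⟨n, Rat.div_int_inj hb (one_le_cfDen_add_two h n) hcop
    (Int.isCoprime_iff_gcd_eq_one.1 (isCoprime_cfNum_cfDen α _)) hn⟩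

end Convergents

section EventualPeriods

variable {f : ℕ → ℤ} {a b : ℕ}

theorem EvPeriod.sub (ha : EvPeriod a f) (hb : EvPeriod b f) (hba : b ≤ a) :
    EvPeriod (a - b) f := by
  obtain ⟨Na, hNa⟩ := ha
  obtain ⟨Nb, hNb⟩ := hb
  refine ⟨Na + Nb, fun n hn => ?_⟩
  rw [← hNa n (by omega), ← hNb (n + (a - b)) (by omega), Nat.add_assoc, Nat.sub_add_cancel hba]

theorem EvPeriod.mod (ha : EvPeriod a f) (hb : EvPeriod b f) : EvPeriod (a % b) f := by
  induction a using Nat.strong_induction_on with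
  | _ a ih =>
    rcases lt_or_ge a b with hab | hab
    · rwa [Nat.mod_eq_of_lt hab]
    · rcases Nat.eq_zero_or_pos b with rfl | hb0
      · rwa [Nat.mod_zero]
      · rw [Nat.mod_eq_sub_mod hab]
        exact ih (a - b) (by omega) (ha.sub hb hab)

theorem periodLen_pos_and_evPeriod {α : ℝ} {t : ℕ} (ht : 0 < t) (h : EvPeriod t (cfTerm α)) :
    0 < periodLen α ∧ EvPeriod (periodLen α) (cfTerm α) :=
  Nat.sInf_mem (s := {t | 0 < t ∧ EvPeriod t (cfTerm α)}) ⟨t, ht, h⟩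

theorem periodLen_dvd {α : ℝ} {t : ℕ} (ht : 0 < t) (h : EvPeriod t (cfTerm α)) :
    periodLen α ∣ t := by
  obtain ⟨hpos, hper⟩ := periodLen_pos_and_evPeriod ht h
  refine Nat.dvd_of_mod_eq_zero (Nat.eq_zero_of_not_pos fun hmod => ?_)
  have hle : periodLen α ≤ t % periodLen α := Nat.sInf_le ⟨hmod, h.mod hper⟩
  exact (Nat.mod_lt t hpos).not_ge hle

end EventualPeriods

theorem Irrational.eq_zero_of_intCast_add_intCast_mul {x : ℝ} (hx : Irrational x) {a b : ℤ}
    (h : (a : ℝ) + b * x = 0) : a = 0 ∧ b = 0 := by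
  obtain rfl : b = 0 := by
    by_contra hb
    exact ((hx.intCast_mul hb).intCast_add a).ne_zero h
  simpa using h

theorem abs_sqrt_sub_div_lt_of_sq_sub_mul_sq_eq_neg_one {d : ℕ} (hd : 2 ≤ d) {a b : ℤ}
    (ha : 0 ≤ a) (hb : 0 < b) (h : a ^ 2 - d * b ^ 2 = -1) :
    |√d - a / b| < 1 / (2 * b ^ 2) := by
  have hbR : (1 : ℝ) ≤ b := by exact_mod_cast hb
  have haR : (0 : ℝ) ≤ a := by exact_mod_cast ha
  have hR : (a : ℝ) ^ 2 - d * b ^ 2 = -1 := by exact_mod_cast h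
  have hdR : (2 : ℝ) ≤ d := by exact_mod_cast hd
  have hsq : √d ^ 2 = d := Real.sq_sqrt (Nat.cast_nonneg d)
  have hsqrt : 1 < √d := Real.lt_sqrt_of_sq_lt (by linarith)
  have hba : (b : ℝ) ≤ a := by nlinarith
  have hprod : (√d * b - a) * (√d * b + a) = 1 := by linear_combination b ^ 2 * hsq - hR
  have hpos : 0 < √d * b - a := by
    have : 0 < √d * b + a := by positivity
    nlinarith
  rw [show √d - a / b = (√d * b - a) / b by field_simp, abs_of_pos (by positivity),
    div_lt_div_iff₀ (by positivity) (by positivity)]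
  nlinarith

section SqrtExpansion

variable {d : ℕ}

theorem two_le_of_irrational_sqrt (hirr : Irrational √d) : 2 ≤ d := by
  by_contra! hd
  interval_cases d <;> simp at hirr

theorem one_lt_sqrt_of_irrational (hirr : Irrational √d) : 1 < √d :=
  Real.lt_sqrt_of_sq_lt (by exact_mod_cast (two_le_of_irrational_sqrt hirr).trans_lt' one_lt_two)

theorem one_le_cfTerm_sqrt (hirr : Irrational √d) : ∀ n, 1 ≤ cfTerm √d n
  | 0 => Int.le_floor.2 (by exact_mod_cast (one_lt_sqrt_of_irrational hirr).le)
  | n + 1 => one_le_cfTerm_succ hirr n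

/-- `cfIter √d n = (sqrtP d n + √d) / sqrtQ d n` (`cfIter_sqrt_mul_sqrtQ`); these closed forms
in the convergents make `P` and `Q` visibly integral. -/
noncomputable def sqrtP (d n : ℕ) : ℤ :=
  (-1) ^ n * (d * cfDen √d (n + 1) * cfDen √d n - cfNum √d (n + 1) * cfNum √d n)

noncomputable def sqrtQ (d n : ℕ) : ℤ :=
  (-1) ^ n * (cfNum √d (n + 1) ^ 2 - d * cfDen √d (n + 1) ^ 2)

theorem cfIter_sqrt_mul_sqrtQ (hirr : Irrational √d) (n : ℕ) :
    cfIter √d n * sqrtQ d n = sqrtP d n + √d := by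
  have hm := mul_cfIter_cfDen_add_cfDen_eq hirr n
  have hdet : (cfNum √d (n + 1) * cfDen √d n - cfNum √d n * cfDen √d (n + 1) : ℝ) =
      (-1) ^ n := by
    exact_mod_cast cfNum_mul_cfDen_sub √d n
  have hsq : √d ^ 2 = d := Real.sq_sqrt (Nat.cast_nonneg d)
  have hs : ((-1 : ℝ) ^ n) ^ 2 = 1 := by rw [pow_right_comm, neg_one_sq, one_pow]
  simp only [sqrtP, sqrtQ]
  push_cast
  linear_combination √d * hs + (-1) ^ n * √d * hdet
    + (-1) ^ n * cfDen √d (n + 1) * (cfDen √d n + cfIter √d n * cfDen √d (n + 1)) * hsq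
    - (-1) ^ n * (cfNum √d (n + 1) + √d * cfDen √d (n + 1)) * hm

theorem sqrtQ_ne_zero (hirr : Irrational √d) (n : ℕ) : sqrtQ d n ≠ 0 := fun hQ =>
  (hirr.intCast_add (sqrtP d n)).ne_zero (by simpa [hQ] using (cfIter_sqrt_mul_sqrtQ hirr n).symm)

theorem sqrtP_succ (d n : ℕ) : sqrtP d (n + 1) = cfTerm √d n * sqrtQ d n - sqrtP d n := by
  simp only [sqrtP, sqrtQ, cfNum_add_two, cfDen_add_two]
  ring

theorem sqrtQ_succ_mul_sqrtQ (d n : ℕ) :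
    sqrtQ d (n + 1) * sqrtQ d n = d - sqrtP d (n + 1) ^ 2 := by
  have hdet := cfNum_mul_cfDen_sub √d (n + 1)
  have hs : ((-1 : ℤ) ^ n) ^ 2 = 1 := by rw [pow_right_comm, neg_one_sq, one_pow]
  simp only [sqrtP, sqrtQ]
  linear_combination (d * ((-1) ^ n) ^ 2 * (cfNum √d (n + 2) * cfDen √d (n + 1)
    - cfNum √d (n + 1) * cfDen √d (n + 2) - (-1) ^ n)) * hdet + (d * (((-1) ^ n) ^ 2 + 1)) * hs

theorem sqrtP_sqrtQ_eq_iff (hirr : Irrational √d) {m n : ℕ} :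
    sqrtP d m = sqrtP d n ∧ sqrtQ d m = sqrtQ d n ↔ cfIter √d m = cfIter √d n := by
  have hm := cfIter_sqrt_mul_sqrtQ hirr m
  have hn := cfIter_sqrt_mul_sqrtQ hirr n
  constructor
  · rintro ⟨hP, hQ⟩
    rw [hP, hQ] at hm
    exact mul_right_cancel₀ (Int.cast_ne_zero.2 (sqrtQ_ne_zero hirr n)) (hm.trans hn.symm)
  · intro h
    rw [h] at hm
    obtain ⟨hPQ, hQ⟩ := hirr.eq_zero_of_intCast_add_intCast_mul
      (a := sqrtP d m * sqrtQ d n - sqrtP d n * sqrtQ d m) (b := sqrtQ d n - sqrtQ d m)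
      (by push_cast; linear_combination sqrtQ d m * hn - sqrtQ d n * hm)
    have hQ : sqrtQ d m = sqrtQ d n := by omega
    rw [hQ, ← sub_mul, mul_eq_zero, sub_eq_zero] at hPQ
    exact ⟨hPQ.resolve_right (sqrtQ_ne_zero hirr n), hQ⟩

/-- `0 < Q` and `P < √d < P + Q` say that the conjugate `(P - √d) / Q` of `(P + √d) / Q` lies
in `(-1, 0)`. -/
theorem reduced_succ (hirr : Irrational √d) {n : ℕ} (hQ : 0 < sqrtQ d n)
    (hP : (sqrtP d n : ℝ) < √d) : 0 < sqrtQ d (n + 1) ∧ (sqrtP d (n + 1) : ℝ) < √d ∧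
      √d < sqrtP d (n + 1) + sqrtQ d (n + 1) := by
  have ha : (1 : ℝ) ≤ cfTerm √d n := by exact_mod_cast one_le_cfTerm_sqrt hirr n
  have hQR : (0 : ℝ) < sqrtQ d n := by exact_mod_cast hQ
  have hP' : (sqrtP d (n + 1) : ℝ) = cfTerm √d n * sqrtQ d n - sqrtP d n := by
    exact_mod_cast sqrtP_succ d n
  have hQQ : (sqrtQ d (n + 1) * sqrtQ d n : ℝ) = d - sqrtP d (n + 1) ^ 2 := by
    exact_mod_cast sqrtQ_succ_mul_sqrtQ d n
  have hsq : √d ^ 2 = d := Real.sq_sqrt (Nat.cast_nonneg d)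
  have hrep := cfIter_sqrt_mul_sqrtQ hirr (n + 1)
  have hX := one_lt_cfIter_succ hirr n
  have hlt : (sqrtQ d n : ℝ) < sqrtP d (n + 1) + √d := by rw [hP']; nlinarith
  have hP'lt : (sqrtP d (n + 1) : ℝ) < √d := by
    by_contra! hge
    have hQ' : (sqrtQ d (n + 1) : ℝ) ≤ 0 := by nlinarith
    nlinarith
  have hQ'pos : (0 : ℝ) < sqrtQ d (n + 1) := by nlinarith
  exact ⟨by exact_mod_cast hQ'pos, hP'lt, by nlinarith⟩

theorem sqrtQ_pos_and_sqrtP_lt_sqrt (hirr : Irrational √d) :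
    ∀ n, 0 < sqrtQ d n ∧ (sqrtP d n : ℝ) < √d
  | 0 => by
    simpa [sqrtP, sqrtQ, cfNum, cfDen, continuant] using
      zero_lt_two.trans_le (two_le_of_irrational_sqrt hirr)
  | n + 1 =>
    have ⟨hQ, hP⟩ := sqrtQ_pos_and_sqrtP_lt_sqrt hirr n
    ⟨(reduced_succ hirr hQ hP).1, (reduced_succ hirr hQ hP).2.1⟩

theorem sqrtQ_pos (hirr : Irrational √d) (n : ℕ) : 0 < sqrtQ d n :=
  (sqrtQ_pos_and_sqrtP_lt_sqrt hirr n).1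

theorem sqrtP_lt_sqrt (hirr : Irrational √d) (n : ℕ) : (sqrtP d n : ℝ) < √d :=
  (sqrtQ_pos_and_sqrtP_lt_sqrt hirr n).2

theorem sqrt_lt_sqrtP_add_sqrtQ (hirr : Irrational √d) (n : ℕ) :
    √d < sqrtP d (n + 1) + sqrtQ d (n + 1) :=
  (reduced_succ hirr (sqrtQ_pos hirr n) (sqrtP_lt_sqrt hirr n)).2.2

theorem sqrtQ_lt_sqrtP_add_sqrt (hirr : Irrational √d) (n : ℕ) :
    (sqrtQ d (n + 1) : ℝ) < sqrtP d (n + 1) + √d := by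
  have hQ : (0 : ℝ) < sqrtQ d (n + 1) := by exact_mod_cast sqrtQ_pos hirr (n + 1)
  rw [← cfIter_sqrt_mul_sqrtQ hirr]
  exact lt_mul_left hQ (one_lt_cfIter_succ hirr n)

theorem exists_evPeriod_cfTerm_sqrt (hirr : Irrational √d) :
    ∃ t, 0 < t ∧ EvPeriod t (cfTerm √d) := by
  have hsqrt : √d ≤ d := by
    have hsq : √d ^ 2 = d := Real.sq_sqrt (Nat.cast_nonneg d)
    nlinarith [one_lt_sqrt_of_irrational hirr]
  have hmaps : Set.MapsTo (fun n => (sqrtP d (n + 1), sqrtQ d (n + 1))) Set.univ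
      (Set.Icc (0, 0) (d, 2 * d)) := by
    intro n _
    have hQ : (0 : ℝ) < sqrtQ d (n + 1) := by exact_mod_cast sqrtQ_pos hirr (n + 1)
    have := sqrtP_lt_sqrt hirr (n + 1)
    have := sqrt_lt_sqrtP_add_sqrtQ hirr n
    have := sqrtQ_lt_sqrtP_add_sqrt hirr n
    simp only [Set.mem_Icc, Prod.mk_le_mk]
    refine ⟨⟨?_, ?_⟩, ?_, ?_⟩
    · exact_mod_cast (show (0 : ℝ) ≤ sqrtP d (n + 1) by linarith)
    · exact_mod_cast hQ.le
    · exact_mod_cast (show (sqrtP d (n + 1) : ℝ) ≤ d by linarith)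
    · exact_mod_cast (show (sqrtQ d (n + 1) : ℝ) ≤ 2 * d by linarith)
  obtain ⟨i, -, j, -, hne, heq⟩ :=
    Set.infinite_univ.exists_ne_map_eq_of_mapsTo hmaps (Set.finite_Icc _ _)
  wlog hij : i < j generalizing i j
  · exact this j i hne.symm heq.symm (hne.lt_or_gt.resolve_left hij)
  have hiter := (sqrtP_sqrtQ_eq_iff hirr).1 (Prod.mk.inj heq)
  refine ⟨j - i, by omega, evPeriod_cfTerm_of_cfIter_add_eq (N := i + 1) ?_⟩
  rw [show i + 1 + (j - i) = j + 1 by omega, hiter]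

/-- The quotient is `-1 / x̄'` for the conjugate `x̄'` of the complete quotient `n + 2`:
conjugating `x = a + 1 / x'` gives `a = x̄ - 1 / x̄'`, and `x̄ ∈ (-1, 0)`. -/
theorem cfTerm_sqrt_succ_eq_floor (hirr : Irrational √d) (n : ℕ) :
    cfTerm √d (n + 1) = ⌊(sqrtQ d (n + 2) : ℝ) / (√d - sqrtP d (n + 2))⌋ := by
  have hne : √d - sqrtP d (n + 2) ≠ 0 := sub_ne_zero.2 (hirr.ne_int _)
  have hQ : (0 : ℝ) < sqrtQ d (n + 1) := by exact_mod_cast sqrtQ_pos hirr (n + 1)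
  have hP := sqrtP_lt_sqrt hirr (n + 1)
  have hPQ := sqrt_lt_sqrtP_add_sqrtQ hirr n
  have hP' : (sqrtP d (n + 2) : ℝ) = cfTerm √d (n + 1) * sqrtQ d (n + 1) - sqrtP d (n + 1) := by
    exact_mod_cast sqrtP_succ d (n + 1)
  have hQQ : (sqrtQ d (n + 2) * sqrtQ d (n + 1) : ℝ) = d - sqrtP d (n + 2) ^ 2 := by
    exact_mod_cast sqrtQ_succ_mul_sqrtQ d (n + 1)
  have hsq : √d ^ 2 = d := Real.sq_sqrt (Nat.cast_nonneg d)
  set v := (sqrtQ d (n + 2) : ℝ) / (√d - sqrtP d (n + 2))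
  have hv : v * sqrtQ d (n + 1) = √d + sqrtP d (n + 2) := by
    rw [div_mul_eq_mul_div, div_eq_iff hne, hQQ]
    linear_combination -hsq
  symm
  rw [Int.floor_eq_iff]
  constructor <;> nlinarith

theorem cfIter_sqrt_succ_eq_of_succ_succ_eq (hirr : Irrational √d) {m n : ℕ}
    (h : cfIter √d (m + 2) = cfIter √d (n + 2)) :
    cfIter √d (m + 1) = cfIter √d (n + 1) := by
  obtain ⟨hP, hQ⟩ := (sqrtP_sqrtQ_eq_iff hirr).2 h
  rw [cfIter_eq_cfTerm_add_inv _ (m + 1), cfIter_eq_cfTerm_add_inv _ (n + 1),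
    cfTerm_sqrt_succ_eq_floor hirr m, cfTerm_sqrt_succ_eq_floor hirr n, hP, hQ]
  exact congrArg _ (congrArg _ h)

theorem cfIter_sqrt_succ_eq_of_add_eq (hirr : Irrational √d) {m n : ℕ} (k : ℕ)
    (h : cfIter √d (m + k + 1) = cfIter √d (n + k + 1)) :
    cfIter √d (m + 1) = cfIter √d (n + 1) := by
  induction k with
  | zero => exact h
  | succ k ih => exact ih (cfIter_sqrt_succ_eq_of_succ_succ_eq hirr (m := m + k) (n := n + k) h)

theorem cfIter_sqrt_periodLen_succ (hirr : Irrational √d) :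
    cfIter √d (periodLen √d + 1) = cfIter √d 1 := by
  obtain ⟨t, ht, hper⟩ := exists_evPeriod_cfTerm_sqrt hirr
  obtain ⟨N, hN⟩ := exists_cfIter_add_eq_of_evPeriod hirr (periodLen_pos_and_evPeriod ht hper).2
  refine cfIter_sqrt_succ_eq_of_add_eq hirr (n := 0) N ?_
  rw [show periodLen √d + N = N + periodLen √d by omega, zero_add]
  exact congrArg (fun x => (Int.fract x)⁻¹) hN

theorem sqrtQ_eq_one_iff (hirr : Irrational √d) (n : ℕ) :
    sqrtQ d n = 1 ↔ cfIter √d (n + 1) = cfIter √d 1 := by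
  rw [cfIter_succ_eq_cfIter_one_iff]
  have hrep := cfIter_sqrt_mul_sqrtQ hirr n
  constructor
  · intro hQ
    rw [hQ] at hrep
    exact ⟨sqrtP d n, by simpa using hrep⟩
  · rintro ⟨c, hc⟩
    rw [hc] at hrep
    have := hirr.eq_zero_of_intCast_add_intCast_mul (a := c * sqrtQ d n - sqrtP d n)
      (b := sqrtQ d n - 1) (by push_cast; linear_combination hrep)
    omega

theorem sqrtQ_periodLen (hirr : Irrational √d) : sqrtQ d (periodLen √d) = 1 :=
  (sqrtQ_eq_one_iff hirr _).2 (cfIter_sqrt_periodLen_succ hirr)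

theorem periodLen_sqrt_dvd_of_sqrtQ_eq_one (hirr : Irrational √d) {n : ℕ} (hn : 0 < n)
    (hQ : sqrtQ d n = 1) : periodLen √d ∣ n := by
  refine periodLen_dvd hn (evPeriod_cfTerm_of_cfIter_add_eq (N := 1) ?_)
  rw [add_comm]
  exact (sqrtQ_eq_one_iff hirr n).1 hQ

theorem exists_odd_sqrtQ_eq_one (hirr : Irrational √d) {x y : ℤ}
    (h : x ^ 2 - d * y ^ 2 = -1) : ∃ n, Odd n ∧ sqrtQ d n = 1 := by
  have habs : |x| ^ 2 - d * |y| ^ 2 = -1 := by rwa [sq_abs, sq_abs]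
  have hy : 0 < |y| := abs_pos.2 (by rintro rfl; nlinarith [sq_nonneg x])
  obtain ⟨n, hx, hy⟩ := exists_eq_cfNum_cfDen_of_abs_sub_lt hirr hy
    ⟨-|x|, d * |y|, by linear_combination -habs⟩
    (abs_sqrt_sub_div_lt_of_sq_sub_mul_sq_eq_neg_one (two_le_of_irrational_sqrt hirr)
      (abs_nonneg x) hy habs)
  have hQ : sqrtQ d (n + 1) = (-1) ^ n := by
    change (-1) ^ (n + 1) * (cfNum √d (n + 2) ^ 2 - d * cfDen √d (n + 2) ^ 2) = _
    rw [← hx, ← hy, habs]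
    ring
  have hpos := sqrtQ_pos hirr (n + 1)
  rcases n.even_or_odd with hn | hn
  · exact ⟨n + 1, hn.add_one, by rw [hQ, hn.neg_one_pow]⟩
  · rw [hQ, hn.neg_one_pow] at hpos
    exact absurd hpos (by decide)

theorem sq_cfNum_sub_mul_sq_cfDen_eq_neg_one {n : ℕ} (hn : Odd n) (hQ : sqrtQ d n = 1) :
    cfNum √d (n + 1) ^ 2 - d * cfDen √d (n + 1) ^ 2 = -1 := by
  rw [sqrtQ, hn.neg_one_pow] at hQ
  linarith

end SqrtExpansion

theorem stmt3_general (d : ℕ) (hsq : ¬ IsSquare d) :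
    (∃ x y : ℤ, x ^ 2 - (d : ℤ) * y ^ 2 = -1) ↔ Odd (periodLen (Real.sqrt d)) := by
  have hirr : Irrational √d := irrational_sqrt_natCast_iff.2 hsq
  constructor
  · rintro ⟨x, y, h⟩
    obtain ⟨n, hn, hQ⟩ := exists_odd_sqrtQ_eq_one hirr h
    exact hn.of_dvd_nat (periodLen_sqrt_dvd_of_sqrtQ_eq_one hirr hn.pos hQ)
  · intro hodd
    exact ⟨_, _, sq_cfNum_sub_mul_sq_cfDen_eq_neg_one hodd (sqrtQ_periodLen hirr)⟩

/-- The negative Pell equation `x² - d y² = -1` has an integer solution iff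
the period length `D(√d)` is odd. -/
theorem stmt3 (d : ℕ) (hd : 0 < d) (hsq : ¬ IsSquare d) :
    (∃ x y : ℤ, x ^ 2 - (d : ℤ) * y ^ 2 = -1) ↔ Odd (periodLen (Real.sqrt d)) :=
  stmt3_general d hsq
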